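/- Let ψ_i, ψ_f and ψ_1, …, ψ_k be unit vectors in H, let T_1, …, T_{k+1} be unitary operators on H with T_tot = T_{k+1} ∘ ⋯ ∘ T_1, and suppose d := ⟨ψ_f, T_tot ψ_i⟩ ≠ 0. For each m ∈ {1, …, k} let (e^{(m)}_j)_{j ∈ J_m} be an orthonormal basis of H indexed by a finite type J_m. Set ψ_{s'} := ⟨ψ_f, P(ψ_f) T_{k+1} P(ψ_k) T_k ⋯ P(ψ_1) T_1 (P(ψ_i) ψ_i)⟩ (the amplitude along the individual Feynman history through ψ_1, …, ψ_k), and for each tuple s = (j_1, …, j_k) set ψ_s := ⟨ψ_f, P(ψ_f) T_{k+1} P(e^{(k)}_{j_k}) T_k ⋯ P(e^{(1)}_{j_1}) T_1 (P(ψ_i) ψ_i)⟩. Then Σ_s ψ_s = d ≠ 0 and the sequential weak value satisfies (P(ψ_k), …, P(ψ_1))_w = ψ_{s'} / Σ_s ψ_s. -/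

import Mathlib

noncomputable section

variable {H : Type*} [NormedAddCommGroup H] [InnerProductSpace ℂ H] [FiniteDimensional ℂ H]

local notation "⟪" x ", " y "⟫" => @inner ℂ _ _ x y

/-- Rank-one orthogonal projection onto the span of `ψ`:  `P(ψ) x = ⟪ψ, x⟫ • ψ`. -/
def rankOneProj (ψ : H) : H →ₗ[ℂ] H where
  toFun x := ⟪ψ, x⟫ • ψ
  map_add' x y := by simp [inner_add_right, add_smul]
  map_smul' c x := by simp [inner_smul_right, mul_smul]

/-- Coerce a unitary (linear isometry equivalence) to a linear map. -/
def toLM (T : H ≃ₗᵢ[ℂ] H) : H →ₗ[ℂ] H := T.toLinearEquiv.toLinearMap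

/-- `chainStep k T P = P_k ∘ T_k ∘ ⋯ ∘ P_1 ∘ T_1` (alternating insertions and evolutions). -/
def chainStep : (k : ℕ) → (Fin k → (H →ₗ[ℂ] H)) → (Fin k → (H →ₗ[ℂ] H)) → (H →ₗ[ℂ] H)
  | 0, _, _ => LinearMap.id
  | k + 1, T, P =>
      P (Fin.last k) ∘ₗ T (Fin.last k) ∘ₗ
        chainStep k (fun m => T m.castSucc) (fun m => P m.castSucc)

/-- `compAll k T = T_k ∘ ⋯ ∘ T_1`, the total composition of the evolutions. -/
def compAll : (k : ℕ) → (Fin k → (H →ₗ[ℂ] H)) → (H →ₗ[ℂ] H)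
  | 0, _ => LinearMap.id
  | k + 1, T => T (Fin.last k) ∘ₗ compAll k (fun m => T m.castSucc)


omit [FiniteDimensional ℂ H] in
lemma myComp_sum {ι : Type*} (s : Finset ι) (A : H →ₗ[ℂ] H) (f : ι → (H →ₗ[ℂ] H)) :
    A ∘ₗ (∑ i ∈ s, f i) = ∑ i ∈ s, A ∘ₗ f i := by
  ext x; simp

omit [FiniteDimensional ℂ H] in
lemma mySum_comp {ι : Type*} (s : Finset ι) (A : H →ₗ[ℂ] H) (f : ι → (H →ₗ[ℂ] H)) :
    (∑ i ∈ s, f i) ∘ₗ A = ∑ i ∈ s, f i ∘ₗ A := by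
  ext x; simp

omit [FiniteDimensional ℂ H] in
lemma sum_rankOneProj_onb {J : Type} [Fintype J] (e : OrthonormalBasis J ℂ H) :
    ∑ j : J, rankOneProj (e j) = (LinearMap.id : H →ₗ[ℂ] H) := by
  ext x
  simp only [LinearMap.coe_sum, Finset.sum_apply, LinearMap.id_coe, id_eq]
  simpa [rankOneProj] using e.sum_repr' x

lemma sum_chainStep (k : ℕ) (T : Fin k → (H →ₗ[ℂ] H)) (J : Fin k → Type)
    [∀ m, Fintype (J m)] (e : ∀ m, OrthonormalBasis (J m) ℂ H) :
    ∑ s : (∀ m, J m), chainStep k T (fun m => rankOneProj (e m (s m))) = compAll k T := by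
  induction k with
  | zero => simp [chainStep, compAll]
  | succ k ih =>
    rw [← (Equiv.sum_comp (Fin.snocEquiv J) _)]
    rw [Fintype.sum_prod_type]
    have h1 : ∀ (j : J (Fin.last k)) (t : ∀ m : Fin k, J m.castSucc),
        chainStep (k+1) T (fun m => rankOneProj (e m ((Fin.snocEquiv J) (j, t) m))) =
        rankOneProj (e (Fin.last k) j) ∘ₗ T (Fin.last k) ∘ₗ
          chainStep k (fun m => T m.castSucc)
            (fun m => rankOneProj (e m.castSucc (t m))) := by
      intro j t
      simp [chainStep, Fin.snocEquiv]
    simp_rw [h1, ← myComp_sum, ← mySum_comp,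
      ih (fun m => T m.castSucc) (fun m => J m.castSucc) (fun m => e m.castSucc),
      sum_rankOneProj_onb, compAll]
    ext x; simp

omit [FiniteDimensional ℂ H] in
lemma inner_rankOneProj_self (ψ : H) (hψ : ‖ψ‖ = 1) (x : H) :
    ⟪ψ, rankOneProj ψ x⟫ = ⟪ψ, x⟫ := by
  have : ⟪ψ, ψ⟫ = (1 : ℂ) := by
    rw [inner_self_eq_norm_sq_to_K, hψ]; norm_num
  simp [rankOneProj, inner_smul_right, this, hψ]

omit [FiniteDimensional ℂ H] in
lemma rankOneProj_self (ψ : H) (hψ : ‖ψ‖ = 1) : rankOneProj ψ ψ = ψ := by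
  have : ⟪ψ, ψ⟫ = (1 : ℂ) := by
    rw [inner_self_eq_norm_sq_to_K, hψ]; norm_num
  simp [rankOneProj, this, hψ]

/-- The sequential weak value of the multi-time projectors `P(ψ_1), …, P(ψ_k)` equals the
amplitude `ψ_{s'}` along the individual Feynman history through `ψ_1, …, ψ_k` divided by the
total Feynman sum `Σ_s ψ_s` over a complete set of histories, which itself equals the nonzero
transition amplitude `d` (STATEMENT 4). -/
theorem sequential_weak_value_eq_history_amplitude_ratio (k : ℕ) (ψi ψf : H) (ψ : Fin k → H)
    (hψi : ‖ψi‖ = 1) (hψf : ‖ψf‖ = 1) (hψ : ∀ m, ‖ψ m‖ = 1)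
    (T : Fin (k + 1) → (H ≃ₗᵢ[ℂ] H))
    (hd : ⟪ψf, compAll (k + 1) (fun m => toLM (T m)) ψi⟫ ≠ 0)
    (J : Fin k → Type) [∀ m, Fintype (J m)]
    (e : ∀ m, OrthonormalBasis (J m) ℂ H) :
    (∑ s : (∀ m, J m),
        ⟪ψf, rankOneProj ψf
          ((toLM (T (Fin.last k)) ∘ₗ
              chainStep k (fun m => toLM (T m.castSucc)) (fun m => rankOneProj (e m (s m))))
            (rankOneProj ψi ψi))⟫) =
      ⟪ψf, compAll (k + 1) (fun m => toLM (T m)) ψi⟫ ∧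
    ⟪ψf, (toLM (T (Fin.last k)) ∘ₗ
        chainStep k (fun m => toLM (T m.castSucc)) (fun m => rankOneProj (ψ m))) ψi⟫ /
        ⟪ψf, compAll (k + 1) (fun m => toLM (T m)) ψi⟫ =
      (⟪ψf, rankOneProj ψf
          ((toLM (T (Fin.last k)) ∘ₗ
              chainStep k (fun m => toLM (T m.castSucc)) (fun m => rankOneProj (ψ m)))
            (rankOneProj ψi ψi))⟫) /
        (∑ s : (∀ m, J m),
          ⟪ψf, rankOneProj ψf
            ((toLM (T (Fin.last k)) ∘ₗ
                chainStep k (fun m => toLM (T m.castSucc)) (fun m => rankOneProj (e m (s m))))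
              (rankOneProj ψi ψi))⟫) := by
  have hsum :
      (∑ s : (∀ m, J m),
        ⟪ψf, rankOneProj ψf
          ((toLM (T (Fin.last k)) ∘ₗ
              chainStep k (fun m => toLM (T m.castSucc)) (fun m => rankOneProj (e m (s m))))
            (rankOneProj ψi ψi))⟫) =
      ⟪ψf, compAll (k + 1) (fun m => toLM (T m)) ψi⟫ := by
    simp_rw [rankOneProj_self ψi hψi, inner_rankOneProj_self ψf hψf, ← inner_sum]
    congr 1
    calc (∑ s : (∀ m, J m),
          (toLM (T (Fin.last k)) ∘ₗ
            chainStep k (fun m => toLM (T m.castSucc)) (fun m => rankOneProj (e m (s m)))) ψi)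
        = ((∑ s : (∀ m, J m),
            toLM (T (Fin.last k)) ∘ₗ
              chainStep k (fun m => toLM (T m.castSucc))
                (fun m => rankOneProj (e m (s m)))) : H →ₗ[ℂ] H) ψi := by
          simp
      _ = (toLM (T (Fin.last k)) ∘ₗ compAll k (fun m => toLM (T m.castSucc))) ψi := by
          rw [← myComp_sum, sum_chainStep k (fun m : Fin k => toLM (T m.castSucc)) J e]
      _ = compAll (k + 1) (fun m => toLM (T m)) ψi := by
          simp [compAll]
  refine ⟨hsum, ?_⟩
  rw [hsum, rankOneProj_self ψi hψi, inner_rankOneProj_self ψf hψf]
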